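/- arXiv:1407.0693 — 3 statements merged into one kernel-verified Lean document; each statement's English description precedes it below -/
import Mathlib

section
/- For every integer n ≥ 2, the Hausdorff dimension of the space of pointed trees (X_n, d_n) is infinite: dim_H(X_n) = ∞. -/
/-!
A pointed tree can carry any `k` binary expansions at once: along the spine `aᵐ`, let the twig
`aʲ b aⁱ b` be present exactly when the `j`-th binary digit of the `i`-th number is `1`. Every
digit family is realised by such a comb, so reading the digits off a tree maps `X n` onto a set
containing the unit cube `[0, 1]ᵏ`. Trees whose balls agree up to radius `M` share all digits of
index below `M - k - 1`, so the map is `1/2`-Hölder. Hence `k ≤ 2 · dimH (X n)` for every `k`.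
-/

open Filter
open scoped ENNReal

noncomputable section

namespace GraphTrees

/-- The word length of an element of a free group: the length of its reduced word. -/
def wlen {n : ℕ} (g : FreeGroup (Fin n)) : ℕ := (FreeGroup.toWord g).length

/-- `h` is a prefix of `g`. -/
def IsPref {n : ℕ} (h g : FreeGroup (Fin n)) : Prop :=
  wlen h + wlen (h⁻¹ * g) = wlen g

/-- Vertex sets of infinite connected subtrees of the Cayley graph of the free group on
`n` generators which contain the identity: subsets containing `1`, infinite, and
prefix-closed. -/
def IsTree {n : ℕ} (S : Set (FreeGroup (Fin n))) : Prop :=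
  1 ∈ S ∧ S.Infinite ∧ ∀ g ∈ S, ∀ h : FreeGroup (Fin n), IsPref h g → h ∈ S

/-- The space `X n` of pointed trees. -/
def X (n : ℕ) : Type := {S : Set (FreeGroup (Fin n)) // IsTree S}

variable {n : ℕ}

/-- The pattern `B_S(m)` of radius `m` of a pointed tree. -/
def ball (S : X n) (m : ℕ) : Set (FreeGroup (Fin n)) := {g ∈ S.1 | wlen g ≤ m}

/-- The set of radii on which two pointed trees have the same pattern. -/
def agreeSet (S S' : X n) : Set ℕ := {m | ball S m = ball S' m}

/-- The ball metric on the space of pointed trees. -/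
def tdist (S S' : X n) : ℝ :=
  letI := Classical.propDecidable (S = S')
  if S = S' then 0 else Real.exp (-((sSup (agreeSet S S') : ℕ) : ℝ))

theorem tdist_eq_of_ne {x y : X n} (h : x ≠ y) :
    tdist x y = Real.exp (-((sSup (agreeSet x y) : ℕ) : ℝ)) := by
  unfold tdist
  rw [if_neg h]

theorem ball_mono_eq {x y : X n} {k m : ℕ} (hkm : k ≤ m)
    (h : ball x m = ball y m) : ball x k = ball y k := by
  ext g
  constructor
  · rintro ⟨hg, hlen⟩
    have hx : g ∈ ball x m := ⟨hg, hlen.trans hkm⟩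
    rw [h] at hx
    exact ⟨hx.1, hlen⟩
  · rintro ⟨hg, hlen⟩
    have hy : g ∈ ball y m := ⟨hg, hlen.trans hkm⟩
    rw [← h] at hy
    exact ⟨hy.1, hlen⟩

theorem eq_of_agree_all {x y : X n} (h : ∀ m, ball x m = ball y m) : x = y := by
  apply Subtype.ext
  ext g
  constructor
  · intro hg
    have hx : g ∈ ball x (wlen g) := ⟨hg, le_rfl⟩
    rw [h] at hx
    exact hx.1
  · intro hg
    have hy : g ∈ ball y (wlen g) := ⟨hg, le_rfl⟩
    rw [← h] at hy
    exact hy.1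

theorem bddAbove_agreeSet {x y : X n} (h : x ≠ y) : BddAbove (agreeSet x y) := by
  by_contra hb
  refine h (eq_of_agree_all fun m => ?_)
  rcases not_bddAbove_iff.mp hb m with ⟨k, hk, hmk⟩
  exact ball_mono_eq hmk.le hk

theorem ball_zero (x : X n) : ball x 0 = {1} := by
  ext g
  simp only [ball, Set.mem_setOf_eq, Nat.le_zero, Set.mem_singleton_iff]
  constructor
  · rintro ⟨hg, hlen⟩
    exact FreeGroup.toWord_eq_nil_iff.mp (List.length_eq_zero_iff.mp hlen)
  · rintro rfl
    exact ⟨x.2.1, by simp [wlen]⟩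

theorem zero_mem_agreeSet (x y : X n) : (0 : ℕ) ∈ agreeSet x y := by
  show ball x 0 = ball y 0
  rw [ball_zero, ball_zero]

theorem tdist_nonneg (x y : X n) : 0 ≤ tdist x y := by
  rcases eq_or_ne x y with rfl | h
  · unfold tdist
    rw [if_pos rfl]
  · rw [tdist_eq_of_ne h]
    exact (Real.exp_pos _).le

theorem tdist_self (x : X n) : tdist x x = 0 := by
  unfold tdist
  rw [if_pos rfl]

theorem tdist_comm (x y : X n) : tdist x y = tdist y x := by
  by_cases h : x = y
  · subst h; rfl
  · have hs : agreeSet x y = agreeSet y x := by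
      ext m
      exact eq_comm
    rw [tdist_eq_of_ne h, tdist_eq_of_ne (Ne.symm h), hs]

theorem tdist_ultra (x y z : X n) : tdist x z ≤ max (tdist x y) (tdist y z) := by
  rcases eq_or_ne x z with rfl | hxz
  · exact le_max_of_le_left (by rw [tdist_self]; exact tdist_nonneg x y)
  rcases eq_or_ne x y with rfl | hxy
  · exact le_max_of_le_right le_rfl
  rcases eq_or_ne y z with rfl | hyz
  · exact le_max_of_le_left le_rfl
  have hbxy := bddAbove_agreeSet hxy
  have hbyz := bddAbove_agreeSet hyz
  have hbxz := bddAbove_agreeSet hxz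
  have hma : sSup (agreeSet x y) ∈ agreeSet x y :=
    Nat.sSup_mem ⟨0, zero_mem_agreeSet x y⟩ hbxy
  have hmb : sSup (agreeSet y z) ∈ agreeSet y z :=
    Nat.sSup_mem ⟨0, zero_mem_agreeSet y z⟩ hbyz
  have hmin : min (sSup (agreeSet x y)) (sSup (agreeSet y z)) ∈ agreeSet x z := by
    have h1 : ball x (min (sSup (agreeSet x y)) (sSup (agreeSet y z)))
        = ball y (min (sSup (agreeSet x y)) (sSup (agreeSet y z))) :=
      ball_mono_eq (min_le_left _ _) hma
    have h2 : ball y (min (sSup (agreeSet x y)) (sSup (agreeSet y z)))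
        = ball z (min (sSup (agreeSet x y)) (sSup (agreeSet y z))) :=
      ball_mono_eq (min_le_right _ _) hmb
    exact h1.trans h2
  have hle : min (sSup (agreeSet x y)) (sSup (agreeSet y z)) ≤ sSup (agreeSet x z) :=
    le_csSup hbxz hmin
  rw [tdist_eq_of_ne hxz, tdist_eq_of_ne hxy, tdist_eq_of_ne hyz]
  rcases le_total (sSup (agreeSet x y)) (sSup (agreeSet y z)) with hab | hab
  · refine le_max_of_le_left (Real.exp_le_exp.mpr ?_)
    have h2 : ((sSup (agreeSet x y) : ℕ) : ℝ) ≤ ((sSup (agreeSet x z) : ℕ) : ℝ) := by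
      exact_mod_cast (min_eq_left hab) ▸ hle
    linarith
  · refine le_max_of_le_right (Real.exp_le_exp.mpr ?_)
    have h2 : ((sSup (agreeSet y z) : ℕ) : ℝ) ≤ ((sSup (agreeSet x z) : ℕ) : ℝ) := by
      exact_mod_cast (min_eq_right hab) ▸ hle
    linarith

theorem tdist_triangle (x y z : X n) : tdist x z ≤ tdist x y + tdist y z :=
  (tdist_ultra x y z).trans
    (max_le (le_add_of_nonneg_right (tdist_nonneg y z))
      (le_add_of_nonneg_left (tdist_nonneg x y)))

instance : MetricSpace (X n) where
  dist := tdist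
  dist_self := tdist_self
  dist_comm := tdist_comm
  dist_triangle := tdist_triangle
  eq_of_dist_eq_zero := by
    intro x y h
    by_contra hne
    have h' : tdist x y = 0 := h
    rw [tdist_eq_of_ne hne] at h'
    exact (Real.exp_pos _).ne' h'

theorem dist_eq_tdist (x y : X n) : dist x y = tdist x y := rfl

/-- The translate `S · g` of a tree `S` by a vertex `g ∈ S`. -/
def translate {n : ℕ} (S : Set (FreeGroup (Fin n))) (g : FreeGroup (Fin n)) :
    Set (FreeGroup (Fin n)) := (fun h => g⁻¹ * h) '' S

/-- The orbit `O(S) = {S · g : g ∈ S}` of a pointed tree under the pseudogroup action. -/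
def orbit (S : X n) : Set (X n) := {S' | ∃ g ∈ S.1, S'.1 = translate S.1 g}

/-- A subset `Y ⊆ X n` is invariant under the pseudogroup action. -/
def Invariant (Y : Set (X n)) : Prop :=
  ∀ S ∈ Y, ∀ g ∈ S.1, ∀ S' : X n, S'.1 = translate S.1 g → S' ∈ Y

/-- `Λ(Z, m)`: the number of distinct patterns of radius `m` of trees in `Z`. -/
def Lam (Z : Set (X n)) (m : ℕ) : ℕ := ((fun S => ball S m) '' Z).ncard

/-- The lower box dimension of a subset of the space of pointed trees. -/
def lowerBox (Z : Set (X n)) : ℝ≥0∞ :=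
  Filter.liminf (fun m : ℕ => ENNReal.ofReal (Real.log (Lam Z m)) / (m : ℝ≥0∞)) Filter.atTop

/-- The upper box dimension of a subset of the space of pointed trees. -/
def upperBox (Z : Set (X n)) : ℝ≥0∞ :=
  Filter.limsup (fun m : ℕ => ENNReal.ofReal (Real.log (Lam Z m)) / (m : ℝ≥0∞)) Filter.atTop

open scoped NNReal

theorem IsPref.toWord_eq_append {h g : FreeGroup (Fin n)} (hp : IsPref h g) :
    g.toWord = h.toWord ++ (h⁻¹ * g).toWord := by
  have hs := FreeGroup.toWord_mul_sublist h (h⁻¹ * g)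
  rw [mul_inv_cancel_left] at hs
  exact hs.eq_of_length (by simpa [wlen] using hp.symm)

theorem IsPref.toWord_isPrefix {h g : FreeGroup (Fin n)} (hp : IsPref h g) :
    h.toWord <+: g.toWord :=
  ⟨_, hp.toWord_eq_append.symm⟩

theorem injOn_mk_setOf_isReduced {α : Type*} [DecidableEq α] :
    Set.InjOn FreeGroup.mk {L : List (α × Bool) | FreeGroup.IsReduced L} := by
  intro L hL L' hL' h
  simpa [FreeGroup.IsReduced.reduce_eq hL, FreeGroup.IsReduced.reduce_eq hL'] using
    FreeGroup.reduce.sound h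

theorem isReduced_of_forall_snd_eq_true {α : Type*} {L : List (α × Bool)}
    (h : ∀ p ∈ L, p.2 = true) : FreeGroup.IsReduced L :=
  List.Pairwise.isChain <|
    List.pairwise_of_forall_mem_list fun p hp q hq _ => by rw [h p hp, h q hq]

def prefixClosure {β : Type*} (W : Set (List β)) : Set (List β) := {L | ∃ w ∈ W, L <+: w}

theorem subset_prefixClosure {β : Type*} (W : Set (List β)) : W ⊆ prefixClosure W :=
  fun w hw => ⟨w, hw, List.prefix_refl w⟩

theorem prefixClosure_subset_setOf_isReduced {α : Type*} {W : Set (List (α × Bool))}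
    (hred : ∀ w ∈ W, FreeGroup.IsReduced w) :
    prefixClosure W ⊆ {L | FreeGroup.IsReduced L} :=
  fun _ ⟨w, hw, hLw⟩ => (hred w hw).infix hLw.isInfix

theorem isTree_mk_prefixClosure {W : Set (List (Fin n × Bool))}
    (hred : ∀ w ∈ W, FreeGroup.IsReduced w) (hinf : W.Infinite) :
    IsTree (FreeGroup.mk '' prefixClosure W) := by
  have hredP := prefixClosure_subset_setOf_isReduced hred
  refine ⟨?_, ?_, ?_⟩
  · obtain ⟨w, hw⟩ := hinf.nonempty
    exact ⟨[], ⟨w, hw, List.nil_prefix⟩, rfl⟩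
  · exact ((hinf.mono (subset_prefixClosure W)).image (injOn_mk_setOf_isReduced.mono hredP))
  · rintro _ ⟨L, ⟨w, hw, hLw⟩, rfl⟩ h hp
    have hL : (FreeGroup.mk L).toWord = L := by
      rw [FreeGroup.toWord_mk, FreeGroup.IsReduced.reduce_eq (hredP ⟨w, hw, hLw⟩)]
    exact ⟨h.toWord, ⟨w, hw, (hL ▸ hp.toWord_isPrefix).trans hLw⟩, FreeGroup.mk_toWord⟩

theorem replicate_append_cons_isPrefix_iff {β : Type*} {a b : β} (hab : a ≠ b) {j j' : ℕ}
    {s t : List β} :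
    List.replicate j a ++ b :: s <+: List.replicate j' a ++ b :: t ↔ j = j' ∧ s <+: t := by
  induction j generalizing j' with
  | zero => cases j' <;> simp [List.replicate_succ, hab.symm]
  | succ j ih => cases j' <;> simp [List.replicate_succ, hab, ih]

section Comb

variable {α : Type*} (a b : α)

def markWord (i j : ℕ) : List (α × Bool) :=
  List.replicate j (a, true) ++ (b, true) :: (List.replicate i (a, true) ++ [(b, true)])

def combWords (marked : ℕ → ℕ → Prop) : Set (List (α × Bool)) :=
  Set.range (fun m => List.replicate m (a, true)) ∪
    {w | ∃ i j, marked i j ∧ w = markWord a b i j}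

variable {a b}

theorem isReduced_markWord (i j : ℕ) : FreeGroup.IsReduced (markWord a b i j) := by
  refine isReduced_of_forall_snd_eq_true fun p hp => ?_
  simp only [markWord, List.mem_append, List.mem_cons, List.mem_replicate,
    List.not_mem_nil, or_false] at hp
  rcases hp with ⟨-, rfl⟩ | rfl | ⟨-, rfl⟩ | rfl <;> rfl

theorem isReduced_of_mem_combWords {marked : ℕ → ℕ → Prop} {w : List (α × Bool)}
    (hw : w ∈ combWords a b marked) : FreeGroup.IsReduced w := by
  rcases hw with ⟨m, rfl⟩ | ⟨i, j, -, rfl⟩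
  · exact isReduced_of_forall_snd_eq_true fun p hp => by rw [(List.mem_replicate.1 hp).2]
  · exact isReduced_markWord i j

theorem infinite_combWords (marked : ℕ → ℕ → Prop) : (combWords a b marked).Infinite :=
  Set.infinite_of_injective_forall_mem
    (fun m m' h => by simpa using congrArg List.length h) fun m => Or.inl ⟨m, rfl⟩

theorem markWord_isPrefix_markWord_iff (hab : a ≠ b) {i j i' j' : ℕ} :
    markWord a b i j <+: markWord a b i' j' ↔ i = i' ∧ j = j' := by
  have hab' : (a, true) ≠ (b, true) := by simpa using hab
  simp only [markWord, replicate_append_cons_isPrefix_iff hab', List.prefix_refl, and_true]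
  tauto

theorem markWord_mem_prefixClosure_combWords_iff (hab : a ≠ b) {marked : ℕ → ℕ → Prop}
    {i j : ℕ} : markWord a b i j ∈ prefixClosure (combWords a b marked) ↔ marked i j := by
  constructor
  · rintro ⟨_, ⟨m, rfl⟩ | ⟨i', j', hm, rfl⟩, hpre⟩
    · have hb : (b, true) ∈ List.replicate m (a, true) := hpre.subset (by simp [markWord])
      exact absurd (List.mem_replicate.1 hb).2 (by simpa using hab.symm)
    · obtain ⟨rfl, rfl⟩ := (markWord_isPrefix_markWord_iff hab).1 hpre
      exact hm
  · intro hm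
    exact subset_prefixClosure _ (Or.inr ⟨i, j, hm, rfl⟩)

end Comb

def combTree (a b : Fin n) (marked : ℕ → ℕ → Prop) : X n :=
  ⟨FreeGroup.mk '' prefixClosure (combWords a b marked),
    isTree_mk_prefixClosure (fun _ => isReduced_of_mem_combWords) (infinite_combWords marked)⟩

theorem mk_markWord_mem_combTree_iff {a b : Fin n} (hab : a ≠ b) {marked : ℕ → ℕ → Prop}
    {i j : ℕ} : FreeGroup.mk (markWord a b i j) ∈ (combTree a b marked).1 ↔ marked i j := by
  rw [← markWord_mem_prefixClosure_combWords_iff hab (marked := marked)]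
  exact injOn_mk_setOf_isReduced.mem_image_iff
    (prefixClosure_subset_setOf_isReduced fun _ => isReduced_of_mem_combWords)
    (isReduced_markWord i j)

theorem mem_iff_mem_of_ball_eq {S S' : X n} {M : ℕ} (h : ball S M = ball S' M)
    {g : FreeGroup (Fin n)} (hg : wlen g ≤ M) : g ∈ S.1 ↔ g ∈ S'.1 := by
  simpa [ball, hg] using congrArg (g ∈ ·) h

theorem wlen_mk_markWord (a b : Fin n) (i j : ℕ) :
    wlen (FreeGroup.mk (markWord a b i j)) = j + i + 2 := by
  rw [wlen, FreeGroup.toWord_mk, (isReduced_markWord i j).reduce_eq]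
  simp [markWord]
  omega

open Classical in
def markDigits (a b : Fin n) (S : X n) (i : ℕ) : ℕ → Fin 2 :=
  fun j => if FreeGroup.mk (markWord a b i j) ∈ S.1 then 1 else 0

def treeCoordinates (a b : Fin n) (k : ℕ) (S : X n) : Fin k → ℝ :=
  fun i => Real.ofDigits (markDigits a b S i)

theorem markDigits_combTree {a b : Fin n} (hab : a ≠ b) (d : ℕ → ℕ → Fin 2) (i : ℕ) :
    markDigits a b (combTree a b fun i j => d i j = 1) i = d i := by
  funext j
  simp only [markDigits, mk_markWord_mem_combTree_iff hab]
  split_ifs with h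
  · exact h.symm
  · omega

theorem pi_Icc_subset_range_treeCoordinates {a b : Fin n} (hab : a ≠ b) (k : ℕ) :
    Set.univ.pi (fun _ : Fin k => Set.Icc (0 : ℝ) 1) ⊆ Set.range (treeCoordinates a b k) := by
  intro x hx
  have hdigits : ∀ i : Fin k, ∃ e : ℕ → Fin 2, Real.ofDigits e = x i := fun i => by
    simpa using Real.ofDigits_SurjOn one_lt_two (hx i trivial)
  choose e he using hdigits
  let d : ℕ → ℕ → Fin 2 := fun i => if h : i < k then e ⟨i, h⟩ else 0
  refine ⟨combTree a b fun i j => d i j = 1, funext fun i => ?_⟩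
  simp [treeCoordinates, markDigits_combTree hab, d, he]

theorem dist_treeCoordinates_le_of_ball_eq (a b : Fin n) {k : ℕ} {S S' : X n} {M : ℕ}
    (h : ball S M = ball S' M) :
    dist (treeCoordinates a b k S) (treeCoordinates a b k S') ≤ 2 ^ (k + 1) / 2 ^ M := by
  refine (dist_pi_le_iff (by positivity)).2 fun i => ?_
  have hagree : ∀ j < M - (k + 1), markDigits a b S i j = markDigits a b S' i j := by
    intro j hj
    have hlen : wlen (FreeGroup.mk (markWord a b i j)) ≤ M := by
      rw [wlen_mk_markWord]
      omega
    unfold markDigits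
    rw [mem_iff_mem_of_ball_eq h hlen]
  calc dist (treeCoordinates a b k S i) (treeCoordinates a b k S' i)
      ≤ ((2 : ℝ) ^ (M - (k + 1)))⁻¹ := by
        simpa [treeCoordinates, Real.dist_eq] using Real.abs_ofDigits_sub_ofDigits_le hagree
    _ ≤ 2 ^ (k + 1) / 2 ^ M := by
      rw [le_div_iff₀ (by positivity), inv_mul_le_iff₀ (by positivity), ← pow_add]
      exact pow_le_pow_right₀ one_le_two (by omega)

theorem inv_two_pow_le_exp_neg_rpow_half (M : ℕ) :
    ((2 : ℝ) ^ M)⁻¹ ≤ Real.exp (-M) ^ (1 / 2 : ℝ) := by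
  rw [← Real.exp_mul, ← inv_pow, show -(M : ℝ) * (1 / 2) = M * (-1 / 2) by ring,
    Real.exp_nat_mul]
  gcongr
  linarith [Real.add_one_le_exp (-1 / 2 : ℝ)]

theorem holderWith_of_dist_le {α β : Type*} [PseudoMetricSpace α] [PseudoMetricSpace β]
    {C r : ℝ≥0} {f : α → β} (h : ∀ x y, dist (f x) (f y) ≤ C * dist x y ^ (r : ℝ)) :
    HolderWith C r f := by
  intro x y
  calc edist (f x) (f y) = ENNReal.ofReal (dist (f x) (f y)) := edist_dist _ _
    _ ≤ ENNReal.ofReal (C * dist x y ^ (r : ℝ)) := ENNReal.ofReal_le_ofReal (h x y)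
    _ = C * edist x y ^ (r : ℝ) := by
      rw [ENNReal.ofReal_mul C.coe_nonneg, ENNReal.ofReal_coe_nnreal,
        ← ENNReal.ofReal_rpow_of_nonneg dist_nonneg r.coe_nonneg, ← edist_dist]

theorem holderWith_treeCoordinates (a b : Fin n) (k : ℕ) :
    HolderWith (2 ^ (k + 1)) (1 / 2) (treeCoordinates a b k) := by
  refine holderWith_of_dist_le fun S S' => ?_
  rcases eq_or_ne S S' with rfl | hne
  · simp
  set M := sSup (agreeSet S S')
  have hM : ball S M = ball S' M :=
    Nat.sSup_mem ⟨0, zero_mem_agreeSet S S'⟩ (bddAbove_agreeSet hne)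
  rw [dist_eq_tdist, tdist_eq_of_ne hne]
  calc dist (treeCoordinates a b k S) (treeCoordinates a b k S')
      ≤ 2 ^ (k + 1) * ((2 : ℝ) ^ M)⁻¹ := dist_treeCoordinates_le_of_ball_eq a b hM
    _ ≤ _ := by
      push_cast
      gcongr
      exact inv_two_pow_le_exp_neg_rpow_half M

theorem dimH_pi_Icc_zero_one (k : ℕ) :
    dimH (Set.univ.pi fun _ : Fin k => Set.Icc (0 : ℝ) 1) = k := by
  rw [Real.dimH_of_mem_nhds (x := fun _ => 1 / 2) (set_pi_mem_nhds Set.finite_univ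
    fun _ _ => Icc_mem_nhds (by norm_num) (by norm_num)), Module.finrank_fin_fun]

/-- For every integer `n ≥ 2`, the Hausdorff dimension of the space of pointed trees
`(X_n, d_n)` is infinite. -/
theorem dimH_X_eq_top (n : ℕ) (hn : 2 ≤ n) :
    dimH (Set.univ : Set (X n)) = ⊤ := by
  have hab : (⟨0, by omega⟩ : Fin n) ≠ ⟨1, by omega⟩ := by simp
  have hk : ∀ k : ℕ, (k : ℝ≥0∞) ≤ 2 * dimH (Set.univ : Set (X n)) := fun k =>
    calc (k : ℝ≥0∞) = dimH (Set.univ.pi fun _ : Fin k => Set.Icc (0 : ℝ) 1) :=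
          (dimH_pi_Icc_zero_one k).symm
      _ ≤ dimH (Set.range (treeCoordinates _ _ k)) :=
        dimH_mono (pi_Icc_subset_range_treeCoordinates hab k)
      _ ≤ dimH (Set.univ : Set (X n)) / ((1 / 2 : ℝ≥0) : ℝ≥0∞) :=
        (holderWith_treeCoordinates _ _ k).dimH_range_le (by norm_num)
      _ = 2 * dimH (Set.univ : Set (X n)) := by
        rw [div_eq_mul_inv, mul_comm]
        simp
  have htop : 2 * dimH (Set.univ : Set (X n)) = ⊤ :=
    top_unique (ENNReal.iSup_natCast ▸ iSup_le hk)
  simpa [ENNReal.mul_eq_top] using htop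

end GraphTrees
end
end

section
/- The map Φ_α : Σ → X_n is Hölder continuous with Hölder continuous inverse on its image: there exist constants C > 0 and γ > 0 such that d_n(Φ_α(σ), Φ_α(σ')) ≤ C·d_Σ(σ, σ')^γ for all σ, σ' ∈ Σ, and there exist constants C' > 0 and γ' > 0 such that d_Σ(σ, σ') ≤ C'·d_n(Φ_α(σ), Φ_α(σ'))^{γ'} for all σ, σ' ∈ Σ. In particular Φ_α is injective and is a homeomorphism onto its image. -/
open Filter
open scoped ENNReal

noncomputable section

namespace GraphTrees

variable {n : ℕ}

/-- The metric on the shift space `Σ = 𝒜^ℤ`. -/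
def dSigma {A : Type} (σ σ' : ℤ → A) : ℝ :=
  sInf ({x : ℝ | ∃ m : ℕ, (∀ i : ℤ, |i| ≤ (m : ℤ) → σ i = σ' i) ∧
    x = (2 : ℝ) ^ (-(m : ℤ))} ∪ {2})

/-!
All letters of the path `λ_σ` have exponent `+1`, so the exponent-sum homomorphism `F_n → ℤ`
maps `λ_σ(k)` to `k`; as the exponent sum is bounded by the word length, `|λ_σ(k)| = |k|` and
`λ_σ(k)` determines `k`. Hence `B_{Φ_α(σ)}(m) = λ_σ([-m, m])`, and two such balls agree exactly
when the paths agree on `[-m, m]`, which (as `α` is injective) means that `σ` and `σ'` agree on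
`[-m, m - 1]`. Since `(e^{-m})^{log 2} = 2^{-m}`, this makes `d_n^{log 2}` and `d_Σ` comparable
up to a factor `2`, which gives both Hölder bounds and injectivity; a continuous injection from
the compact space `Σ` is an embedding.
-/

section ExponentSum

variable {α : Type*}

def expSum : FreeGroup α →* Multiplicative ℤ :=
  FreeGroup.lift fun _ => Multiplicative.ofAdd 1

@[simp]
lemma expSum_of (a : α) : expSum (FreeGroup.of a) = Multiplicative.ofAdd 1 :=
  FreeGroup.lift_apply_of

lemma abs_toAdd_expSum_mk_le (L : List (α × Bool)) :
    |(expSum (FreeGroup.mk L)).toAdd| ≤ L.length := by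
  induction L with
  | nil => simp [← FreeGroup.one_eq_mk]
  | cons x L ih =>
    rw [← List.singleton_append, ← FreeGroup.mul_mk, map_mul, toAdd_mul, List.length_append,
      List.length_singleton]
    have hx : |(expSum (FreeGroup.mk [x])).toAdd| = 1 := by
      rcases x with ⟨a, _ | _⟩ <;> simp [expSum, FreeGroup.lift_mk]
    push_cast
    linarith [abs_add_le (expSum (FreeGroup.mk [x])).toAdd (expSum (FreeGroup.mk L)).toAdd]

lemma abs_toAdd_expSum_le_wlen (g : FreeGroup (Fin n)) : |(expSum g).toAdd| ≤ wlen g := by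
  have := abs_toAdd_expSum_mk_le g.toWord
  rwa [FreeGroup.mk_toWord] at this

end ExponentSum

def AgreeUpTo {β : Type*} (f g : ℤ → β) (m : ℕ) : Prop :=
  ∀ i : ℤ, |i| ≤ m → f i = g i

lemma eq_of_increments_eq {G : Type*} [Group G] {f g u v : ℤ → G} (h0 : f 0 = g 0)
    (hf : ∀ k, f (k + 1) = f k * u k) (hg : ∀ k, g (k + 1) = g k * v k) {m : ℕ}
    (huv : AgreeUpTo u v m) {k : ℤ} (hk : |k| ≤ m) : f k = g k := by
  obtain ⟨hkl, hku⟩ := abs_le.mp hk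
  clear hk
  rcases le_total 0 k with hk0 | hk0
  · induction k, hk0 using Int.leInduction with
    | base => exact h0
    | succ k hk0 ih =>
      rw [hf, hg, ih (by omega) (by omega), huv k (abs_le.mpr ⟨by omega, by omega⟩)]
  · induction k, hk0 using Int.leInductionDown with
    | base => exact h0
    | pred k hk0 ih =>
      have hf' := hf (k - 1)
      have hg' := hg (k - 1)
      rw [sub_add_cancel] at hf' hg'
      rw [eq_mul_inv_of_mul_eq hf'.symm, eq_mul_inv_of_mul_eq hg'.symm, ih (by omega) (by omega),
        huv (k - 1) (abs_le.mpr ⟨by omega, by omega⟩)]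

variable {A : Type}

/-- `lam` is the path `λ_σ` in the Cayley graph read off from `σ` through `α`. -/
structure IsPath (α : A → Fin n) (σ : ℤ → A) (lam : ℤ → FreeGroup (Fin n)) : Prop where
  zero : lam 0 = 1
  succ : ∀ k, lam (k + 1) = lam k * FreeGroup.of (α (σ k))

namespace IsPath

variable {α : A → Fin n} {σ σ' : ℤ → A} {lam lam' : ℤ → FreeGroup (Fin n)}

lemma toAdd_expSum (h : IsPath α σ lam) (k : ℤ) : (expSum (lam k)).toAdd = k := by
  induction k using Int.induction_on with
  | zero => simp [h.zero]
  | succ k ih => simp [h.succ, ih]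
  | pred k ih =>
    have hk := h.succ (-k - 1)
    rw [sub_add_cancel] at hk
    rw [eq_mul_inv_of_mul_eq hk.symm]
    simp [ih, sub_eq_add_neg]

lemma wlen_le (h : IsPath α σ lam) (k : ℤ) : (wlen (lam k) : ℤ) ≤ |k| := by
  have hnorm (g : FreeGroup (Fin n)) : wlen g = g.norm := rfl
  induction k using Int.induction_on with
  | zero => simp [h.zero, hnorm]
  | succ k ih =>
    have := FreeGroup.norm_mul_le (lam k) (FreeGroup.of (α (σ k)))
    rw [h.succ, hnorm, FreeGroup.norm_of] at *
    rw [abs_of_nonneg (by omega)] at *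
    omega
  | pred k ih =>
    have hk := h.succ (-k - 1)
    rw [sub_add_cancel] at hk
    have := FreeGroup.norm_mul_le (lam (-k)) (FreeGroup.of (α (σ (-k - 1))))⁻¹
    rw [eq_mul_inv_of_mul_eq hk.symm, hnorm, FreeGroup.norm_inv_eq, FreeGroup.norm_of] at *
    rw [abs_of_nonpos (by omega)] at *
    omega

lemma wlen_eq (h : IsPath α σ lam) (k : ℤ) : (wlen (lam k) : ℤ) = |k| :=
  le_antisymm (h.wlen_le k) <| by
    simpa only [h.toAdd_expSum] using abs_toAdd_expSum_le_wlen (lam k)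

lemma index_eq (h : IsPath α σ lam) (h' : IsPath α σ' lam') {j j' : ℤ}
    (hjj' : lam j = lam' j') : j = j' := by
  rw [← h.toAdd_expSum j, ← h'.toAdd_expSum j', hjj']

lemma ball_eq_image (h : IsPath α σ lam) {S : X n} (hS : S.1 = Set.range lam) (m : ℕ) :
    ball S m = lam '' {k | |k| ≤ m} := by
  ext g
  simp only [ball, hS, Set.mem_ofPred_eq, Set.mem_image, Set.mem_range]
  constructor
  · rintro ⟨⟨k, rfl⟩, hk⟩
    exact ⟨k, by rw [← h.wlen_eq]; exact_mod_cast hk, rfl⟩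
  · rintro ⟨k, hk, rfl⟩
    exact ⟨⟨k, rfl⟩, by rw [← h.wlen_eq] at hk; exact_mod_cast hk⟩

lemma ball_eq_ball_iff (h : IsPath α σ lam) (h' : IsPath α σ' lam') {S S' : X n}
    (hS : S.1 = Set.range lam) (hS' : S'.1 = Set.range lam') {m : ℕ} :
    ball S m = ball S' m ↔ AgreeUpTo lam lam' m := by
  rw [h.ball_eq_image hS, h'.ball_eq_image hS']
  refine ⟨fun hb k hk => ?_, fun heq => Set.image_congr heq⟩
  have hk' := Set.mem_image_of_mem lam (show k ∈ {k : ℤ | |k| ≤ m} from hk)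
  rw [hb] at hk'
  obtain ⟨j, -, hj⟩ := hk'
  rw [h'.index_eq h hj] at hj
  exact hj.symm

lemma ball_eq_of_agree (h : IsPath α σ lam) (h' : IsPath α σ' lam') {S S' : X n}
    (hS : S.1 = Set.range lam) (hS' : S'.1 = Set.range lam') {m : ℕ}
    (hag : AgreeUpTo σ σ' m) : ball S m = ball S' m :=
  (h.ball_eq_ball_iff h' hS hS').2 fun _ hk =>
    eq_of_increments_eq (h.zero.trans h'.zero.symm) h.succ h'.succ
      (fun i hi => congrArg (FreeGroup.of ∘ α) (hag i hi)) hk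

lemma agree_of_ball_eq_succ (hα : Function.Injective α) (h : IsPath α σ lam)
    (h' : IsPath α σ' lam') {S S' : X n} (hS : S.1 = Set.range lam)
    (hS' : S'.1 = Set.range lam') {m : ℕ} (hb : ball S (m + 1) = ball S' (m + 1)) :
    AgreeUpTo σ σ' m := by
  intro i hi
  have hlam := (h.ball_eq_ball_iff h' hS hS').1 hb
  obtain ⟨hil, hiu⟩ := abs_le.mp hi
  have hstep := h.succ i
  rw [hlam (i + 1) (abs_le.mpr ⟨by omega, by push_cast; omega⟩),
    hlam i (abs_le.mpr ⟨by omega, by push_cast; omega⟩), h'.succ i] at hstep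
  exact hα (FreeGroup.of_injective (mul_left_cancel hstep).symm)

end IsPath

lemma dist_le_exp_neg_of_ball_eq {x y : X n} {m : ℕ} (h : ball x m = ball y m) :
    dist x y ≤ Real.exp (-m) := by
  rcases eq_or_ne x y with rfl | hne
  · rw [dist_self]
    positivity
  · rw [dist_eq_tdist, tdist_eq_of_ne hne, Real.exp_le_exp, neg_le_neg_iff, Nat.cast_le]
    exact le_csSup (bddAbove_agreeSet hne) h

lemma dist_le_one (x y : X n) : dist x y ≤ 1 := by
  simpa using dist_le_exp_neg_of_ball_eq (x := x) (y := y) (m := 0) (by rw [ball_zero, ball_zero])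

lemma exists_ball_eq_and_dist_eq {x y : X n} (hne : x ≠ y) :
    ∃ m : ℕ, ball x m = ball y m ∧ dist x y = Real.exp (-m) :=
  ⟨_, Nat.sSup_mem ⟨0, zero_mem_agreeSet x y⟩ (bddAbove_agreeSet hne), tdist_eq_of_ne hne⟩

lemma exp_neg_rpow_log_two (m : ℕ) : Real.exp (-m) ^ Real.log 2 = (2 : ℝ) ^ (-(m : ℤ)) := by
  rw [← Real.exp_mul, ← Real.rpow_intCast, Real.rpow_def_of_pos two_pos]
  push_cast
  ring_nf

section ShiftMetric

variable {σ σ' : ℤ → A}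

lemma dSigma_le_of_agree {m : ℕ} (h : AgreeUpTo σ σ' m) :
    dSigma σ σ' ≤ (2 : ℝ) ^ (-(m : ℤ)) :=
  csInf_le ⟨0, by rintro _ (⟨k, -, rfl⟩ | rfl) <;> positivity⟩ (Or.inl ⟨m, h, rfl⟩)

lemma dSigma_le_two : dSigma σ σ' ≤ 2 :=
  csInf_le ⟨0, by rintro _ (⟨k, -, rfl⟩ | rfl) <;> positivity⟩ (Or.inr rfl)

lemma le_dSigma {c : ℝ} (h2 : c ≤ 2)
    (hc : ∀ m : ℕ, AgreeUpTo σ σ' m → c ≤ (2 : ℝ) ^ (-(m : ℤ))) :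
    c ≤ dSigma σ σ' :=
  le_csInf ⟨2, Or.inr rfl⟩ <| by
    rintro _ (⟨m, hm, rfl⟩ | rfl)
    exacts [hc m hm, h2]

lemma dSigma_self (σ : ℤ → A) : dSigma σ σ = 0 := by
  have hlim : Tendsto (fun m : ℕ => (2 : ℝ) ^ (-(m : ℤ))) atTop (nhds 0) := by
    simp only [zpow_neg, zpow_natCast]
    exact tendsto_inv_atTop_zero.comp (tendsto_pow_atTop_atTop_of_one_lt one_lt_two)
  refine le_antisymm (ge_of_tendsto' hlim fun m => dSigma_le_of_agree fun _ _ => rfl) ?_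
  exact le_dSigma (by norm_num) fun m _ => by positivity

end ShiftMetric

section Holder

variable {Φ : (ℤ → A) → X n}

lemma injective_of_ball_eq_succ
    (hball : ∀ σ σ' m, ball (Φ σ) (m + 1) = ball (Φ σ') (m + 1) → AgreeUpTo σ σ' m) :
    Function.Injective Φ := fun σ σ' h =>
  funext fun i => hball σ σ' i.natAbs (by rw [h]) i (Int.abs_eq_natAbs i).le

lemma dist_rpow_log_two_le_dSigma
    (hagree : ∀ σ σ' m, AgreeUpTo σ σ' m → ball (Φ σ) m = ball (Φ σ') m) (σ σ' : ℤ → A) :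
    dist (Φ σ) (Φ σ') ^ Real.log 2 ≤ dSigma σ σ' := by
  have hlog : 0 ≤ Real.log 2 := (Real.log_pos one_lt_two).le
  refine le_dSigma ?_ fun m hm => ?_
  · calc dist (Φ σ) (Φ σ') ^ Real.log 2 ≤ 1 ^ Real.log 2 :=
          Real.rpow_le_rpow dist_nonneg (dist_le_one _ _) hlog
      _ ≤ 2 := by norm_num
  · rw [← exp_neg_rpow_log_two]
    exact Real.rpow_le_rpow dist_nonneg (dist_le_exp_neg_of_ball_eq (hagree σ σ' m hm)) hlog

lemma dist_le_dSigma_rpow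
    (hagree : ∀ σ σ' m, AgreeUpTo σ σ' m → ball (Φ σ) m = ball (Φ σ') m) (σ σ' : ℤ → A) :
    dist (Φ σ) (Φ σ') ≤ dSigma σ σ' ^ (Real.log 2)⁻¹ := by
  have hlog : 0 < Real.log 2 := Real.log_pos one_lt_two
  calc dist (Φ σ) (Φ σ') = (dist (Φ σ) (Φ σ') ^ Real.log 2) ^ (Real.log 2)⁻¹ :=
        (Real.rpow_rpow_inv dist_nonneg hlog.ne').symm
    _ ≤ dSigma σ σ' ^ (Real.log 2)⁻¹ :=
        Real.rpow_le_rpow (by positivity) (dist_rpow_log_two_le_dSigma hagree σ σ')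
          (inv_nonneg.2 hlog.le)

lemma dSigma_le_of_ball_eq
    (hball : ∀ σ σ' m, ball (Φ σ) (m + 1) = ball (Φ σ') (m + 1) → AgreeUpTo σ σ' m)
    {σ σ' : ℤ → A} {m : ℕ} (h : ball (Φ σ) m = ball (Φ σ') m) :
    dSigma σ σ' ≤ 2 * (2 : ℝ) ^ (-(m : ℤ)) := by
  cases m with
  | zero => simpa using dSigma_le_two
  | succ m =>
    calc dSigma σ σ' ≤ (2 : ℝ) ^ (-(m : ℤ)) := dSigma_le_of_agree (hball σ σ' m h)
      _ = 2 * (2 : ℝ) ^ (-((m + 1 : ℕ) : ℤ)) := by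
        push_cast
        rw [neg_add, zpow_add₀ two_ne_zero, zpow_neg_one]
        ring

lemma dSigma_le_two_mul_dist_rpow
    (hball : ∀ σ σ' m, ball (Φ σ) (m + 1) = ball (Φ σ') (m + 1) → AgreeUpTo σ σ' m)
    (σ σ' : ℤ → A) : dSigma σ σ' ≤ 2 * dist (Φ σ) (Φ σ') ^ Real.log 2 := by
  rcases eq_or_ne σ σ' with rfl | hne
  · rw [dSigma_self, dist_self, Real.zero_rpow (Real.log_pos one_lt_two).ne', mul_zero]
  obtain ⟨m, hm, hdist⟩ := exists_ball_eq_and_dist_eq ((injective_of_ball_eq_succ hball).ne hne)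
  rw [hdist, exp_neg_rpow_log_two]
  exact dSigma_le_of_ball_eq hball hm

lemma continuous_of_ball_eq_of_agree [TopologicalSpace A] [DiscreteTopology A]
    (hagree : ∀ σ σ' m, AgreeUpTo σ σ' m → ball (Φ σ) m = ball (Φ σ') m) : Continuous Φ := by
  refine Metric.continuous_iff'.2 fun σ ε hε => ?_
  obtain ⟨m, hm⟩ := exists_nat_gt (-Real.log ε)
  have hcyl : IsOpen ((Finset.Icc (-(m : ℤ)) m : Set ℤ).pi fun i => {σ i}) :=
    isOpen_set_pi (Finset.finite_toSet _) fun _ _ => isOpen_discrete _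
  filter_upwards [hcyl.mem_nhds fun i _ => rfl] with σ' hσ'
  have hag : AgreeUpTo σ' σ m := fun i hi => hσ' i (by simpa [abs_le] using hi)
  calc dist (Φ σ') (Φ σ) ≤ Real.exp (-m) := dist_le_exp_neg_of_ball_eq (hagree σ' σ m hag)
    _ < ε := by
      rw [← Real.exp_log hε]
      exact Real.exp_lt_exp.2 (by linarith)

end Holder

theorem shift_embedding_holder_general (n : ℕ) (A : Type) [Fintype A]
    [TopologicalSpace A] [DiscreteTopology A]
    (α : A → Fin n) (hα : Function.Injective α)
    (Φ : (ℤ → A) → X n)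
    (hΦ : ∀ σ : ℤ → A, ∃ lam : ℤ → FreeGroup (Fin n),
      lam 0 = 1 ∧ (∀ k : ℤ, lam (k + 1) = lam k * FreeGroup.of (α (σ k))) ∧
      (Φ σ).1 = Set.range lam) :
    (∃ C > (0 : ℝ), ∃ γ > (0 : ℝ), ∀ σ σ' : ℤ → A,
        dist (Φ σ) (Φ σ') ≤ C * dSigma σ σ' ^ γ) ∧
    (∃ C' > (0 : ℝ), ∃ γ' > (0 : ℝ), ∀ σ σ' : ℤ → A,
        dSigma σ σ' ≤ C' * dist (Φ σ) (Φ σ') ^ γ') ∧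
    Function.Injective Φ ∧ Topology.IsEmbedding Φ := by
  choose lam h0 hsucc hrange using hΦ
  have hpath (σ : ℤ → A) : IsPath α σ (lam σ) := ⟨h0 σ, hsucc σ⟩
  have hagree : ∀ σ σ' m, AgreeUpTo σ σ' m → ball (Φ σ) m = ball (Φ σ') m :=
    fun σ σ' _ => (hpath σ).ball_eq_of_agree (hpath σ') (hrange σ) (hrange σ')
  have hball : ∀ σ σ' m, ball (Φ σ) (m + 1) = ball (Φ σ') (m + 1) → AgreeUpTo σ σ' m :=
    fun σ σ' _ => (hpath σ).agree_of_ball_eq_succ hα (hpath σ') (hrange σ) (hrange σ')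
  have hlog : 0 < Real.log 2 := Real.log_pos one_lt_two
  have hinj := injective_of_ball_eq_succ hball
  refine ⟨⟨1, one_pos, (Real.log 2)⁻¹, inv_pos.2 hlog, fun σ σ' => ?_⟩,
    ⟨2, two_pos, Real.log 2, hlog, dSigma_le_two_mul_dist_rpow hball⟩, hinj,
    ((continuous_of_ball_eq_of_agree hagree).isClosedEmbedding hinj).isEmbedding⟩
  rw [one_mul]
  exact dist_le_dSigma_rpow hagree σ σ'

/-- The equivariant embedding `Φ_α` of the shift space `Σ = 𝒜^ℤ` into `X_n` is Hölder
continuous with Hölder continuous inverse on its image; in particular it is injective and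
a homeomorphism onto its image. -/
theorem shift_embedding_holder (n : ℕ) (hn : 2 ≤ n) (A : Type) [Fintype A]
    [TopologicalSpace A] [DiscreteTopology A]
    (hA2 : 2 ≤ Fintype.card A) (hAn : Fintype.card A ≤ n)
    (α : A → Fin n) (hα : Function.Injective α)
    (Φ : (ℤ → A) → X n)
    (hΦ : ∀ σ : ℤ → A, ∃ lam : ℤ → FreeGroup (Fin n),
      lam 0 = 1 ∧ (∀ k : ℤ, lam (k + 1) = lam k * FreeGroup.of (α (σ k))) ∧
      (Φ σ).1 = Set.range lam) :
    (∃ C > (0 : ℝ), ∃ γ > (0 : ℝ), ∀ σ σ' : ℤ → A,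
        dist (Φ σ) (Φ σ') ≤ C * dSigma σ σ' ^ γ) ∧
    (∃ C' > (0 : ℝ), ∃ γ' > (0 : ℝ), ∀ σ σ' : ℤ → A,
        dSigma σ σ' ≤ C' * dist (Φ σ) (Φ σ') ^ γ') ∧
    Function.Injective Φ ∧ Topology.IsEmbedding Φ :=
  shift_embedding_holder_general n A α hα Φ hΦ

end GraphTrees
end
end

section
/- The image Φ_α(Σ) ⊆ X_n of the shift space Σ satisfies 0 < dim_H(Φ_α(Σ)) < ∞, and moreover dim_H(Φ_α(Σ)) equals both the lower box dimension and the upper box dimension of Φ_α(Σ) in (X_n, d_n). -/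
open Filter
open scoped ENNReal

noncomputable section

namespace GraphTrees

variable {n : ℕ}

/-!
Since `λ_σ(k)` has word length `|k|`, the ball of radius `m` of `Φ_α(σ)` consists of the
`λ_σ(k)` with `|k| ≤ m`, and it determines and is determined by `σ` on `[-m, m)`, the letters
being recovered as `λ_σ(k)⁻¹ λ_σ(k + 1)`. Hence `d_n(Φ σ, Φ τ) ≤ e^{-m}` exactly when `σ` and `τ`
agree on `[-m, m)`, and everything reduces to the two-sided shift on `c = |𝒜|` letters with this
metric. There are `c^{2m}` patterns of radius `m`, so both box dimensions equal `2 log c`, and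
covering by the `c^{2m}` cylinders of diameter `e^{-m}` bounds the `2 log c`-dimensional Hausdorff
measure by `1`. Conversely, reading `(σ j, σ (-j - 1))` as the `j`-th digit of a real number in
base `c²` maps the image onto `[0, 1]` by a map that is Hölder of exponent `2 log c`, so the
Hausdorff dimension is at least `2 log c`.
-/

open Set Real Topology MeasureTheory
open scoped NNReal

theorem dist_le_exp_neg_iff (x y : X n) (m : ℕ) :
    dist x y ≤ exp (-m) ↔ ball x m = ball y m := by
  rcases eq_or_ne x y with rfl | hne
  · simp [(exp_pos _).le]
  · rw [dist_eq_tdist, tdist_eq_of_ne hne, exp_le_exp, neg_le_neg_iff, Nat.cast_le]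
    exact ⟨fun h => ball_mono_eq h (Nat.sSup_mem ⟨0, zero_mem_agreeSet x y⟩
      (bddAbove_agreeSet hne)), le_csSup (bddAbove_agreeSet hne)⟩

theorem exp_neg_rpow_two_mul_log (m : ℕ) {c : ℝ} (hc : 0 < c) :
    exp (-m) ^ (2 * log c) = (c ^ (2 * m))⁻¹ := by
  rw [← exp_mul, ← rpow_natCast, ← rpow_neg hc.le, rpow_def_of_pos hc]
  push_cast
  ring_nf

theorem exists_nat_exp_neg_near {r : ℝ} (h0 : 0 < r) (h1 : r ≤ 1) :
    ∃ M : ℕ, r ≤ exp (-M) ∧ exp (-M) ≤ exp 1 * r := by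
  have hlog : 0 ≤ -log r := neg_nonneg.mpr (log_nonpos h0.le h1)
  refine ⟨⌊-log r⌋₊, ?_, ?_⟩
  · calc r = exp (-(-log r)) := by rw [neg_neg, exp_log h0]
      _ ≤ exp (-⌊-log r⌋₊) := exp_le_exp.mpr (neg_le_neg (Nat.floor_le hlog))
  · calc exp (-⌊-log r⌋₊) ≤ exp (1 + log r) := by
          have := Nat.lt_floor_add_one (-log r)
          exact exp_le_exp.mpr (by linarith)
      _ = exp 1 * r := by rw [exp_add, exp_log h0]

theorem ofReal_exp_neg_rpow_two_mul_log (m : ℕ) {c : ℕ} (hc : 0 < c) :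
    ENNReal.ofReal (exp (-m)) ^ (2 * log c) = ((c ^ (2 * m) : ℕ) : ℝ≥0∞)⁻¹ := by
  rw [ENNReal.ofReal_rpow_of_pos (exp_pos _), exp_neg_rpow_two_mul_log m (by positivity),
    ENNReal.ofReal_inv_of_pos (by positivity), ← Nat.cast_pow, ENNReal.ofReal_natCast]

theorem card_fun_Ico {A : Type*} [Fintype A] (m : ℕ) :
    Fintype.card (Ico (-m : ℤ) m → A) = Fintype.card A ^ (2 * m) := by
  rw [Fintype.card_fun]
  simp only [Fintype.card_ofFinset, Int.card_Ico, sub_neg_eq_add]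
  congr 1
  omega

section Walk

variable {A : Type*} (α : A → Fin n)

/-- The reduced word of `λ_σ(k)`: for `k < 0` its `i`-th letter is `α (σ (-i - 1))⁻¹`. -/
def walkWord (σ : ℤ → A) (k : ℤ) : List (Fin n × Bool) :=
  (List.range k.natAbs).map fun i : ℕ =>
    (α (σ (if 0 ≤ k then (i : ℤ) else Int.negSucc i)), decide (0 ≤ k))

def walk (σ : ℤ → A) (k : ℤ) : FreeGroup (Fin n) := FreeGroup.mk (walkWord α σ k)

variable {α}

theorem snd_of_mem_walkWord {σ : ℤ → A} {k : ℤ} {x : Fin n × Bool}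
    (hx : x ∈ walkWord α σ k) : x.2 = decide (0 ≤ k) := by
  obtain ⟨i, -, rfl⟩ := List.mem_map.mp hx
  rfl

theorem length_walkWord (σ : ℤ → A) (k : ℤ) : (walkWord α σ k).length = k.natAbs := by
  simp [walkWord]

theorem toWord_walk (σ : ℤ → A) (k : ℤ) : (walk α σ k).toWord = walkWord α σ k := by
  rw [walk, FreeGroup.toWord_mk, ← FreeGroup.isReduced_iff_reduce_eq]
  refine (List.pairwise_of_forall_mem_list fun x hx y hy _ => ?_).isChain
  rw [snd_of_mem_walkWord hx, snd_of_mem_walkWord hy]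

theorem wlen_walk (σ : ℤ → A) (k : ℤ) : wlen (walk α σ k) = k.natAbs := by
  rw [wlen, toWord_walk, length_walkWord]

theorem walk_zero (σ : ℤ → A) : walk α σ 0 = 1 := rfl

theorem walk_succ (σ : ℤ → A) (k : ℤ) :
    walk α σ (k + 1) = walk α σ k * FreeGroup.of (α (σ k)) := by
  rcases le_or_gt 0 k with hk | hk
  · have : walkWord α σ (k + 1) = walkWord α σ k ++ [(α (σ k), true)] := by
      obtain ⟨j, rfl⟩ := Int.eq_ofNat_of_zero_le hk
      simp [walkWord, show ((j : ℤ) + 1).natAbs = j + 1 by omega, List.range_succ,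
        show (0 : ℤ) ≤ j + 1 by omega]
    rw [walk, walk, this, ← FreeGroup.mul_mk]
    rfl
  · have : walkWord α σ k = walkWord α σ (k + 1) ++ [(α (σ k), false)] := by
      obtain ⟨j, rfl⟩ := Int.eq_negSucc_of_lt_zero hk
      cases j with
      | zero => rfl
      | succ j =>
        have hsucc : Int.negSucc (j + 1) + 1 = Int.negSucc j := rfl
        simp [walkWord, List.range_succ, hsucc]
    have hinv : FreeGroup.mk [(α (σ k), false)] = (FreeGroup.of (α (σ k)))⁻¹ := rfl
    rw [walk, walk, this, ← FreeGroup.mul_mk, hinv, inv_mul_cancel_right]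

theorem eq_walk {σ : ℤ → A} {lam : ℤ → FreeGroup (Fin n)} (h0 : lam 0 = 1)
    (hstep : ∀ k, lam (k + 1) = lam k * FreeGroup.of (α (σ k))) : lam = walk α σ := by
  funext k
  induction k using Int.induction_on with
  | zero => rw [h0, walk_zero]
  | succ i ih => rw [hstep, walk_succ, ih]
  | pred i ih =>
    have hl := hstep (-i - 1)
    have hw := walk_succ (α := α) σ (-i - 1)
    rw [sub_add_cancel] at hl hw
    exact mul_right_cancel (hl.symm.trans (ih.trans hw))

theorem eq_of_walk_eq_walk {σ τ : ℤ → A} {k j : ℤ} (h : walk α σ k = walk α τ j) :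
    k = j := by
  have hw := congrArg FreeGroup.toWord h
  rw [toWord_walk, toWord_walk] at hw
  have hlen : k.natAbs = j.natAbs := by
    rw [← length_walkWord σ, ← length_walkWord τ, hw]
  rcases eq_or_ne k 0 with rfl | hk
  · omega
  obtain ⟨x, hx⟩ := List.exists_mem_of_length_pos
    (by rw [length_walkWord]; omega : 0 < (walkWord α σ k).length)
  have hsign := (snd_of_mem_walkWord hx).symm.trans (snd_of_mem_walkWord (hw ▸ hx))
  rw [decide_eq_decide] at hsign
  omega

theorem walk_eq_walk_of_eqOn {σ τ : ℤ → A} {m : ℕ} (h : EqOn σ τ (Ico (-m) m)) {k : ℤ}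
    (hk : k.natAbs ≤ m) : walk α σ k = walk α τ k := by
  rw [walk, walk, walkWord, walkWord]
  congr 1
  refine List.map_congr_left fun i hi => ?_
  rw [List.mem_range] at hi
  rw [h]
  split_ifs <;> simp only [mem_Ico, Int.negSucc_eq] <;> omega

theorem eqOn_of_walk_eq_walk (hα : Function.Injective α) {σ τ : ℤ → A} {m : ℕ}
    (h : ∀ k : ℤ, k.natAbs ≤ m → walk α σ k = walk α τ k) : EqOn σ τ (Ico (-m) m) := by
  intro k hk
  rw [mem_Ico] at hk
  have hletter : ∀ ρ : ℤ → A, FreeGroup.of (α (ρ k)) = (walk α ρ k)⁻¹ * walk α ρ (k + 1) :=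
    fun ρ => by rw [walk_succ, inv_mul_cancel_left]
  apply hα
  apply FreeGroup.of_injective
  rw [hletter, hletter, h k (by omega), h (k + 1) (by omega)]

theorem ball_eq_image_walk {σ : ℤ → A} {S : X n} (hS : S.1 = range (walk α σ)) (m : ℕ) :
    ball S m = walk α σ '' {k | k.natAbs ≤ m} := by
  ext g
  simp only [ball, hS, mem_ofPred_eq, mem_image, mem_range]
  constructor
  · rintro ⟨⟨k, rfl⟩, hk⟩
    exact ⟨k, by rwa [wlen_walk] at hk, rfl⟩
  · rintro ⟨k, hk, rfl⟩
    exact ⟨⟨k, rfl⟩, by rwa [wlen_walk]⟩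

theorem ball_eq_ball_iff_eqOn (hα : Function.Injective α) {σ τ : ℤ → A} {S T : X n}
    (hS : S.1 = range (walk α σ)) (hT : T.1 = range (walk α τ)) (m : ℕ) :
    ball S m = ball T m ↔ EqOn σ τ (Ico (-m) m) := by
  rw [ball_eq_image_walk hS, ball_eq_image_walk hT]
  refine ⟨fun h => eqOn_of_walk_eq_walk hα fun k hk => ?_, fun h => ?_⟩
  · obtain ⟨j, -, hjk⟩ : walk α σ k ∈ walk α τ '' {k | k.natAbs ≤ m} := h ▸ ⟨k, hk, rfl⟩
    exact (eq_of_walk_eq_walk hjk ▸ hjk).symm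
  · exact image_congr fun k hk => walk_eq_walk_of_eqOn h hk

end Walk

section Digits

variable {A : Type*} [Fintype A]

def pairDigits (σ : ℤ → A) : ℕ → Fin (Fintype.card (A × A)) :=
  fun j => Fintype.equivFin (A × A) (σ j, σ (Int.negSucc j))

theorem pairDigits_surjective : Function.Surjective (pairDigits (A := A)) := by
  intro d
  let p j := (Fintype.equivFin (A × A)).symm (d j)
  refine ⟨fun k => match k with | .ofNat j => (p j).1 | .negSucc j => (p j).2, ?_⟩
  funext j
  simp [pairDigits, p]

theorem abs_ofDigits_pairDigits_sub_le {σ τ : ℤ → A} {m : ℕ} (h : EqOn σ τ (Ico (-m) m)) :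
    |ofDigits (pairDigits σ) - ofDigits (pairDigits τ)| ≤
      exp (-m) ^ (2 * log (Fintype.card A)) := by
  have hc : (0 : ℝ) < Fintype.card A := by exact_mod_cast Fintype.card_pos_iff.2 ⟨σ 0⟩
  rw [exp_neg_rpow_two_mul_log m hc]
  convert abs_ofDigits_sub_ofDigits_le (n := m) fun i hi => ?_ using 2
  · push_cast [Fintype.card_prod]
    ring
  · rw [pairDigits, pairDigits, h (by simp only [mem_Ico]; omega),
      h (by simp only [mem_Ico, Int.negSucc_eq]; omega)]

end Digits

section ShiftCoding

variable {A Y : Type*} [MetricSpace Y]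

def IsShiftCoding (Φ : (ℤ → A) → Y) : Prop :=
  ∀ (σ τ : ℤ → A) (m : ℕ), dist (Φ σ) (Φ τ) ≤ exp (-m) ↔ EqOn σ τ (Ico (-m) m)

variable {Φ : (ℤ → A) → Y}

namespace IsShiftCoding

theorem dist_le_one (hΦ : IsShiftCoding Φ) (σ τ : ℤ → A) : dist (Φ σ) (Φ τ) ≤ 1 := by
  simpa using (hΦ σ τ 0).2 (by simp)

theorem injective (hΦ : IsShiftCoding Φ) : Function.Injective Φ := by
  intro σ τ h
  funext k
  refine (hΦ σ τ (k.natAbs + 1)).1 (by rw [h, dist_self]; positivity) ?_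
  simp only [mem_Ico]
  omega

theorem ediam_image_le (hΦ : IsShiftCoding Φ) (m : ℕ) (w : Ico (-m : ℤ) m → A) :
    Metric.ediam (Φ '' {σ | ∀ k : Ico (-m : ℤ) m, σ k = w k}) ≤
      ENNReal.ofReal (exp (-m)) := by
  refine Metric.ediam_le ?_
  rintro _ ⟨σ, hσ, rfl⟩ _ ⟨τ, hτ, rfl⟩
  rw [edist_dist]
  exact ENNReal.ofReal_le_ofReal
    ((hΦ σ τ m).2 fun k hk => (hσ ⟨k, hk⟩).trans (hτ ⟨k, hk⟩).symm)

theorem holderOnWith_extend (hΦ : IsShiftCoding Φ) {g : (ℤ → A) → ℝ} {d : ℝ≥0}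
    (hg : ∀ (σ τ : ℤ → A) (m : ℕ), EqOn σ τ (Ico (-m) m) →
      |g σ - g τ| ≤ exp (-m) ^ (d : ℝ)) :
    HolderOnWith (exp d).toNNReal d (Function.extend Φ g 0) (range Φ) := by
  rintro _ ⟨σ, rfl⟩ _ ⟨τ, rfl⟩
  rw [hΦ.injective.extend_apply, hΦ.injective.extend_apply, edist_dist, edist_dist,
    Real.dist_eq]
  rcases (dist_nonneg (x := Φ σ) (y := Φ τ)).eq_or_lt with h0 | h0
  · rw [hΦ.injective (dist_eq_zero.mp h0.symm), sub_self, abs_zero, ENNReal.ofReal_zero]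
    exact zero_le
  obtain ⟨M, hrM, hMr⟩ := exists_nat_exp_neg_near h0 (hΦ.dist_le_one σ τ)
  change _ ≤ ENNReal.ofReal (exp d) * _
  rw [ENNReal.ofReal_rpow_of_pos h0, ← ENNReal.ofReal_mul (exp_pos _).le]
  refine ENNReal.ofReal_le_ofReal ((hg σ τ M ((hΦ σ τ M).1 hrM)).trans ?_)
  calc exp (-M) ^ (d : ℝ) ≤ (exp 1 * dist (Φ σ) (Φ τ)) ^ (d : ℝ) :=
        rpow_le_rpow (exp_pos _).le hMr d.2
    _ = exp d * dist (Φ σ) (Φ τ) ^ (d : ℝ) := by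
        rw [mul_rpow (exp_pos _).le h0.le, exp_one_rpow]

variable [Fintype A]

theorem dimH_range_le [Nonempty A] (hΦ : IsShiftCoding Φ) :
    dimH (range Φ) ≤ ENNReal.ofReal (2 * log (Fintype.card A)) := by
  borelize Y
  set d : ℝ≥0 := (2 * log (Fintype.card A)).toNNReal
  have hd : (d : ℝ) = 2 * log (Fintype.card A) :=
    Real.coe_toNNReal _ (mul_nonneg zero_le_two (log_natCast_nonneg _))
  have hsum : ∀ m : ℕ, ∑ _w : Ico (-m : ℤ) m → A, ENNReal.ofReal (exp (-m)) ^ (d : ℝ) = 1 := by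
    intro m
    rw [Finset.sum_const, Finset.card_univ, card_fun_Ico, nsmul_eq_mul, hd,
      ofReal_exp_neg_rpow_two_mul_log m Fintype.card_pos]
    exact ENNReal.mul_inv_cancel (by positivity) (ENNReal.natCast_ne_top _)
  have htendsto : Tendsto (fun m : ℕ => ENNReal.ofReal (exp (-m))) atTop (𝓝 0) := by
    simpa using ENNReal.tendsto_ofReal
      (tendsto_exp_atBot.comp (tendsto_neg_atTop_atBot.comp tendsto_natCast_atTop_atTop))
  refine dimH_le_of_hausdorffMeasure_ne_top (d := d)
    (ne_top_of_le_ne_top ENNReal.one_ne_top ?_)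
  calc μH[d] (range Φ)
      ≤ liminf (fun m : ℕ => ∑ w : Ico (-m : ℤ) m → A,
          Metric.ediam (Φ '' {σ | ∀ k : Ico (-m : ℤ) m, σ k = w k}) ^ (d : ℝ)) atTop :=
        Measure.hausdorffMeasure_le_liminf_sum _ _ _ htendsto _
          (Eventually.of_forall fun m => hΦ.ediam_image_le m)
          (Eventually.of_forall fun m => by
            rintro _ ⟨σ, rfl⟩
            exact mem_iUnion.2 ⟨fun k => σ k, σ, fun k => rfl, rfl⟩)
    _ ≤ liminf (fun _ : ℕ => (1 : ℝ≥0∞)) atTop :=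
        liminf_le_liminf (Eventually.of_forall fun m => (hsum m).le.trans' <|
          Finset.sum_le_sum fun w _ => ENNReal.rpow_le_rpow (hΦ.ediam_image_le m w) d.2)
    _ = 1 := liminf_const 1

theorem le_dimH_range (hΦ : IsShiftCoding Φ) (hA : 1 < Fintype.card A) :
    ENNReal.ofReal (2 * log (Fintype.card A)) ≤ dimH (range Φ) := by
  set d : ℝ≥0 := (2 * log (Fintype.card A)).toNNReal
  have hlog : 0 < log (Fintype.card A) := log_pos (Nat.one_lt_cast.mpr hA)
  have hd : 0 < d := Real.toNNReal_pos.mpr (by positivity)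
  have hf := hΦ.holderOnWith_extend (g := fun σ => ofDigits (pairDigits σ)) (d := d)
    fun σ τ m h => by
      rw [Real.coe_toNNReal _ (by positivity)]
      exact abs_ofDigits_pairDigits_sub_le h
  have himage :
      Icc 0 1 ⊆ Function.extend Φ (fun σ => ofDigits (pairDigits σ)) 0 '' range Φ := by
    rw [← range_comp, Function.extend_comp hΦ.injective]
    intro y hy
    obtain ⟨x, -, rfl⟩ :=
      ofDigits_SurjOn (b := Fintype.card (A × A)) (by rw [Fintype.card_prod]; nlinarith) hy
    obtain ⟨σ, rfl⟩ := pairDigits_surjective x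
    exact ⟨σ, rfl⟩
  have hIcc : dimH (Icc (0 : ℝ) 1) = 1 := by
    rw [Real.dimH_of_nonempty_interior (by simp), Module.finrank_self, Nat.cast_one]
  calc ENNReal.ofReal (2 * log (Fintype.card A)) = dimH (Icc (0 : ℝ) 1) * d := by
        rw [hIcc, one_mul]; rfl
    _ ≤ dimH (range Φ) / d * d := by
        gcongr
        exact (dimH_mono himage).trans (hf.dimH_image_le hd)
    _ = dimH (range Φ) :=
        ENNReal.div_mul_cancel (by exact_mod_cast hd.ne') ENNReal.coe_ne_top

theorem dimH_range (hΦ : IsShiftCoding Φ) (hA : 1 < Fintype.card A) :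
    dimH (range Φ) = ENNReal.ofReal (2 * log (Fintype.card A)) :=
  have : Nonempty A := Fintype.card_pos_iff.mp (by omega)
  le_antisymm hΦ.dimH_range_le (hΦ.le_dimH_range hA)

end IsShiftCoding

end ShiftCoding

theorem ncard_range_of_eq_iff_eqOn {A β : Type*} [Fintype A] [Nonempty A]
    {g : (ℤ → A) → β} {m : ℕ} (hg : ∀ σ τ : ℤ → A, g σ = g τ ↔ EqOn σ τ (Ico (-m) m)) :
    (range g).ncard = Fintype.card A ^ (2 * m) := by
  let r : (ℤ → A) → (Ico (-m : ℤ) m → A) := fun σ k => σ k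
  have hr : Function.Surjective r := Subtype.surjective_restrict _
  have hgr : ∀ σ τ, g σ = g τ ↔ r σ = r τ := fun σ τ => by
    rw [hg, funext_iff, Subtype.forall]
    rfl
  have hrange : range g = range (g ∘ Function.surjInv hr) := by
    refine (range_comp_subset_range _ _).antisymm' ?_
    rintro _ ⟨σ, rfl⟩
    exact ⟨r σ, (hgr _ _).2 (Function.surjInv_eq hr _)⟩
  have hinj : Function.Injective (g ∘ Function.surjInv hr) := fun w w' h => by
    rwa [Function.comp_apply, Function.comp_apply, hgr, Function.surjInv_eq hr,
      Function.surjInv_eq hr] at h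
  rw [hrange, ← image_univ, ncard_image_of_injective _ hinj, ncard_univ,
    Nat.card_eq_fintype_card, card_fun_Ico]

theorem lowerBox_eq_and_upperBox_eq {Z : Set (X n)} {c : ℕ}
    (hZ : ∀ m, Lam Z m = c ^ (2 * m)) :
    lowerBox Z = ENNReal.ofReal (2 * log c) ∧ upperBox Z = ENNReal.ofReal (2 * log c) := by
  have hev : (fun m : ℕ => ENNReal.ofReal (log (Lam Z m)) / m) =ᶠ[atTop]
      fun _ => ENNReal.ofReal (2 * log c) := by
    filter_upwards [eventually_ne_atTop 0] with m hm
    rw [hZ, Nat.cast_pow, log_pow,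
      show ((2 * m : ℕ) : ℝ) * log c = 2 * log c * m by push_cast; ring,
      ENNReal.ofReal_mul' (Nat.cast_nonneg m), ENNReal.ofReal_natCast,
      ENNReal.mul_div_cancel_right (Nat.cast_ne_zero.mpr hm) (ENNReal.natCast_ne_top m)]
  exact ⟨(liminf_congr hev).trans (liminf_const _), (limsup_congr hev).trans (limsup_const _)⟩

theorem shift_image_dimensions_general (n : ℕ) (A : Type) [Fintype A]
    (hA2 : 2 ≤ Fintype.card A)
    (α : A → Fin n) (hα : Function.Injective α)
    (Φ : (ℤ → A) → X n)
    (hΦ : ∀ σ : ℤ → A, ∃ lam : ℤ → FreeGroup (Fin n),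
      lam 0 = 1 ∧ (∀ k : ℤ, lam (k + 1) = lam k * FreeGroup.of (α (σ k))) ∧
      (Φ σ).1 = Set.range lam) :
    0 < dimH (Set.range Φ) ∧ dimH (Set.range Φ) < ⊤ ∧
    dimH (Set.range Φ) = lowerBox (Set.range Φ) ∧
    dimH (Set.range Φ) = upperBox (Set.range Φ) := by
  have : Nonempty A := Fintype.card_pos_iff.mp (by omega)
  have hwalk : ∀ σ, (Φ σ).1 = range (walk α σ) := fun σ => by
    obtain ⟨lam, h0, hstep, hrange⟩ := hΦ σ
    rw [hrange, eq_walk h0 hstep]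
  have hball : ∀ σ τ (m : ℕ), ball (Φ σ) m = ball (Φ τ) m ↔ EqOn σ τ (Ico (-m) m) :=
    fun σ τ m => ball_eq_ball_iff_eqOn hα (hwalk σ) (hwalk τ) m
  have hcoding : IsShiftCoding Φ := fun σ τ m =>
    (dist_le_exp_neg_iff _ _ m).trans (hball σ τ m)
  have hLam : ∀ m, Lam (range Φ) m = Fintype.card A ^ (2 * m) := fun m => by
    rw [Lam, ← range_comp]
    exact ncard_range_of_eq_iff_eqOn fun σ τ => hball σ τ m
  obtain ⟨hlower, hupper⟩ := lowerBox_eq_and_upperBox_eq hLam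
  have hlog : 0 < 2 * log (Fintype.card A) := by
    have := log_pos ((Nat.one_lt_cast (α := ℝ)).mpr hA2)
    positivity
  rw [hcoding.dimH_range hA2, hlower, hupper]
  exact ⟨ENNReal.ofReal_pos.mpr hlog, ENNReal.ofReal_lt_top, rfl, rfl⟩

/-- The image of the shift space `Σ = 𝒜^ℤ` in `X_n` has positive finite Hausdorff
dimension, which moreover coincides with both its lower and upper box dimensions. -/
theorem shift_image_dimensions (n : ℕ) (hn : 2 ≤ n) (A : Type) [Fintype A]
    [TopologicalSpace A] [DiscreteTopology A]
    (hA2 : 2 ≤ Fintype.card A) (hAn : Fintype.card A ≤ n)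
    (α : A → Fin n) (hα : Function.Injective α)
    (Φ : (ℤ → A) → X n)
    (hΦ : ∀ σ : ℤ → A, ∃ lam : ℤ → FreeGroup (Fin n),
      lam 0 = 1 ∧ (∀ k : ℤ, lam (k + 1) = lam k * FreeGroup.of (α (σ k))) ∧
      (Φ σ).1 = Set.range lam) :
    0 < dimH (Set.range Φ) ∧ dimH (Set.range Φ) < ⊤ ∧
    dimH (Set.range Φ) = lowerBox (Set.range Φ) ∧
    dimH (Set.range Φ) = upperBox (Set.range Φ) :=
  shift_image_dimensions_general n A hA2 α hα Φ hΦ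

end GraphTrees
end
end
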